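/- arXiv:1608.04259 — 2 statements merged into one kernel-verified Lean document; each statement's English description precedes it below -/
import Mathlib

section
/- Let r_1, r_2 be relatively prime positive integers, both at least 2. Then exactly half of the integers in the set {1, 2, ..., (r_1−1)(r_2−1)} are representable as p_1·r_1 + p_2·r_2 with p_1, p_2 non-negative integers; that is, the number of representable integers in this range equals (r_1−1)(r_2−1)/2. -/
/-!
Put `F = a b - a - b`. Since `gcd(a, b) = 1`, every integer is uniquely `n = x a + y b` with
`0 ≤ x < b`, and `n` is representable exactly when `y ≥ 0`. As
`F - n = (b - 1 - x) a + (-1 - y) b`, exactly one of `n` and `F - n` is representable. Hence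
`d ↦ F - d` exchanges the representable and the non-representable integers of `[0, F]`, so half
of them are representable; passing to `[1, F + 1] = [1, (a - 1)(b - 1)]` trades `0` for `F + 1`,
both representable.
-/

open Finset

def IsRepresentable (a b : ℕ) (n : ℤ) : Prop :=
  ∃ p q : ℕ, n = p * a + q * b

section Representable

variable {a b : ℕ}

theorem isRepresentable_natCast_iff {d : ℕ} :
    IsRepresentable a b d ↔ ∃ p q : ℕ, d = p * a + q * b := by
  unfold IsRepresentable
  norm_cast

theorem not_isRepresentable_of_neg {n : ℤ} (hn : n < 0) : ¬ IsRepresentable a b n := by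
  rintro ⟨p, q, rfl⟩
  exact hn.not_ge (by positivity)

theorem Nat.Coprime.exists_eq_mul_add_mul (hcop : a.Coprime b) (hb : 0 < b) (n : ℤ) :
    ∃ x y : ℤ, 0 ≤ x ∧ x < b ∧ n = x * a + y * b := by
  obtain ⟨u, v, huv⟩ := Nat.isCoprime_iff_coprime.mpr hcop
  refine ⟨n * u % b, n * v + n * u / b * a, Int.emod_nonneg _ (by omega),
    Int.emod_lt_of_pos _ (by omega), ?_⟩
  linear_combination (-n) * huv - (a : ℤ) * Int.mul_ediv_add_emod (n * u) b

theorem Nat.Coprime.isRepresentable_mul_add_mul_iff (hcop : a.Coprime b) (hb : 0 < b)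
    {x y : ℤ} (hx : 0 ≤ x) (hxb : x < b) : IsRepresentable a b (x * a + y * b) ↔ 0 ≤ y := by
  refine ⟨fun ⟨p, q, hpq⟩ => ?_, fun hy => ?_⟩
  · obtain ⟨k, hpk⟩ : (b : ℤ) ∣ p - x :=
      (Nat.isCoprime_iff_coprime.mpr hcop.symm).dvd_of_dvd_mul_right ⟨y - q, by linarith⟩
    have hk : 0 ≤ k := by
      by_contra! hk
      nlinarith [p.cast_nonneg (α := ℤ)]
    have hyb : y * b = q * b + k * a * b := by linear_combination hpq + (a : ℤ) * hpk
    refine nonneg_of_mul_nonneg_left ?_ (by exact_mod_cast hb : (0 : ℤ) < b)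
    rw [hyb]
    positivity
  · lift x to ℕ using hx
    lift y to ℕ using hy
    exact ⟨x, y, rfl⟩

theorem Nat.Coprime.isRepresentable_iff_not_isRepresentable_sub (hcop : a.Coprime b)
    (hb : 0 < b) (n : ℤ) :
    IsRepresentable a b n ↔ ¬ IsRepresentable a b (a * b - a - b - n) := by
  obtain ⟨x, y, hx, hxb, rfl⟩ := hcop.exists_eq_mul_add_mul hb n
  have hsub : (a * b - a - b - (x * a + y * b) : ℤ) = (b - 1 - x) * a + (-1 - y) * b := by ring
  rw [hsub, hcop.isRepresentable_mul_add_mul_iff hb hx hxb,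
    hcop.isRepresentable_mul_add_mul_iff hb (by omega) (by omega)]
  omega

end Representable

section Counting

variable {P : ℕ → Prop} [DecidablePred P]

theorem two_mul_card_filter_range_of_iff_not_sub {N : ℕ} (h : ∀ d ≤ N, P d ↔ ¬ P (N - d)) :
    2 * #{d ∈ range (N + 1) | P d} = N + 1 := by
  have hreflect : #{d ∈ range (N + 1) | P d} = #{d ∈ range (N + 1) | ¬ P d} := by
    refine card_nbij' (N - ·) (N - ·) ?_ ?_ ?_ ?_ <;>
      intro d hd <;> simp only [coe_filter, Set.mem_ofPred_eq, mem_range] at hd ⊢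
    · exact ⟨by omega, (h d (by omega)).mp hd.2⟩
    · refine ⟨by omega, (h (N - d) (by omega)).mpr ?_⟩
      rw [Nat.sub_sub_self (by omega)]
      exact hd.2
    · exact Nat.sub_sub_self (by omega)
    · exact Nat.sub_sub_self (by omega)
  rw [two_mul]
  nth_rw 2 [hreflect]
  rw [card_filter_add_card_filter_not, card_range]

theorem card_filter_Icc_one_eq_card_filter_range {N : ℕ} (h0 : P 0) (hN : P (N + 1)) :
    #{d ∈ Icc 1 (N + 1) | P d} = #{d ∈ range (N + 1) | P d} := by
  have hlast : #{d ∈ range (N + 2) | P d} = #{d ∈ range (N + 1) | P d} + 1 := by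
    rw [range_add_one, filter_insert, if_pos hN, card_insert_of_notMem (by simp)]
  have hfirst : #{d ∈ range (N + 2) | P d} = #{d ∈ Icc 1 (N + 1) | P d} + 1 := by
    have : range (N + 2) = insert 0 (Icc 1 (N + 1)) := by ext d; simp; omega
    rw [this, filter_insert, if_pos h0, card_insert_of_notMem (by simp)]
  omega

end Counting

/-- For coprime `r₁, r₂ ≥ 2`, exactly half of the integers in
`{1, …, (r₁−1)(r₂−1)}` are representable as `p₁·r₁ + p₂·r₂` with `p₁, p₂ ∈ ℕ`. -/
theorem stmt_3 (r₁ r₂ : ℕ) (h1 : 2 ≤ r₁) (h2 : 2 ≤ r₂) (hcop : Nat.Coprime r₁ r₂) :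
    2 * Set.ncard {d : ℕ | 1 ≤ d ∧ d ≤ (r₁ - 1) * (r₂ - 1) ∧
        ∃ p₁ p₂ : ℕ, d = p₁ * r₁ + p₂ * r₂} = (r₁ - 1) * (r₂ - 1) := by
  classical
  set N := (r₁ - 1) * (r₂ - 1) - 1
  have hN : (r₁ - 1) * (r₂ - 1) = N + 1 := by
    have : 1 ≤ (r₁ - 1) * (r₂ - 1) := Nat.mul_pos (by omega) (by omega)
    omega
  have hNF : (N : ℤ) = r₁ * r₂ - r₁ - r₂ := by
    zify [show 1 ≤ r₁ by omega, show 1 ≤ r₂ by omega] at hN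
    linarith
  have hsymm (d : ℤ) : IsRepresentable r₁ r₂ d ↔ ¬ IsRepresentable r₁ r₂ (N - d) := by
    rw [hNF]; exact hcop.isRepresentable_iff_not_isRepresentable_sub (by omega) d
  have hset : {d : ℕ | 1 ≤ d ∧ d ≤ (r₁ - 1) * (r₂ - 1) ∧ ∃ p₁ p₂ : ℕ, d = p₁ * r₁ + p₂ * r₂} =
      ↑({d ∈ Icc 1 (N + 1) | IsRepresentable r₁ r₂ (d : ℤ)} : Finset ℕ) := by
    ext d
    simp [isRepresentable_natCast_iff, hN, and_assoc]
  rw [hset, Set.ncard_coe_finset, card_filter_Icc_one_eq_card_filter_range, hN]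
  · refine two_mul_card_filter_range_of_iff_not_sub fun d hd => ?_
    rw [hsymm, Nat.cast_sub hd]
  · exact ⟨0, 0, by simp⟩
  · rw [hsymm]
    exact not_isRepresentable_of_neg (by push_cast; omega)
end

section
/- Suppose a gc LG family with n variables has charges 0 < q_i < 1/2 for all i, and suppose that for every variable Z with 1/3 < q(Z) < 1/2 there is a distinct associated variable Y with q(Y) = 1 − 2q(Z), with distinct Z's having distinct Y's. Then the central charge c = 3 Σ_i (1 − 2 q_i) satisfies c ≥ n; equivalently n ≤ c. -/
/-- If all charges lie in `(0, 1/2)` and every variable with charge in `(1/3, 1/2)`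
has a distinct partner of charge `1 − 2q` (distinct variables having distinct
partners), then the central charge `c = 3 ∑ (1 − 2qᵢ)` satisfies `c ≥ n`. -/
theorem stmt_17 (n : ℕ) (q : Fin n → ℚ) (hq : ∀ i, 0 < q i ∧ q i < 1/2)
    (f : Fin n → Fin n)
    (hf : ∀ i, 1/3 < q i → q (f i) = 1 - 2 * q i)
    (hinj : Set.InjOn f {i | 1/3 < q i}) :
    (n : ℚ) ≤ 3 * ∑ i, (1 - 2 * q i) := by
  classical
  set g : Fin n → ℚ := fun i => 3 * (1 - 2 * q i) with hg
  set S : Finset (Fin n) := Finset.univ.filter (fun i => 1/3 < q i) with hS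
  have hmem : ∀ i, i ∈ S ↔ 1/3 < q i := by intro i; simp [hS]
  set T : Finset (Fin n) := S.image f with hT
  have hTsub : T ⊆ Sᶜ := by
    intro j hj
    rw [hT, Finset.mem_image] at hj
    obtain ⟨i, hi, rfl⟩ := hj
    have hiq := (hmem i).1 hi
    have h1 := hf i hiq
    have h2 := (hq i).2
    rw [Finset.mem_compl, hmem]
    intro hcontra
    nlinarith
  have hTcard : T.card = S.card := by
    rw [hT]
    apply Finset.card_image_of_injOn
    intro a ha b hb hab
    exact hinj ((hmem a).1 ha) ((hmem b).1 hb) hab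
  -- sum over T equals sum of g ∘ f over S
  have hsumT : ∑ i ∈ T, g i = ∑ i ∈ S, g (f i) := by
    rw [hT]
    apply Finset.sum_image
    intro a ha b hb hab
    exact hinj ((hmem a).1 ha) ((hmem b).1 hb) hab
  -- pair bound
  have hpair : ∀ i ∈ S, (2 : ℚ) ≤ g i + g (f i) := by
    intro i hi
    have hiq := (hmem i).1 hi
    have h1 := hf i hiq
    simp only [hg]
    rw [h1]
    nlinarith
  -- singleton bound
  have hsingle : ∀ i ∈ Sᶜ \ T, (1 : ℚ) ≤ g i := by
    intro i hi
    have : i ∈ Sᶜ := Finset.mem_sdiff.1 hi |>.1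
    rw [Finset.mem_compl, hmem] at this
    push_neg at this
    simp only [hg]
    linarith
  have hsplit : ∑ i ∈ Sᶜ \ T, g i + ∑ i ∈ T, g i = ∑ i ∈ Sᶜ, g i :=
    Finset.sum_sdiff hTsub
  have htotal : ∑ i ∈ S, g i + ∑ i ∈ Sᶜ, g i = ∑ i, g i :=
    Finset.sum_add_sum_compl S g
  have hb1 : (2 : ℚ) * S.card ≤ ∑ i ∈ S, g i + ∑ i ∈ S, g (f i) := by
    rw [← Finset.sum_add_distrib]
    calc (2 : ℚ) * S.card = ∑ _i ∈ S, (2:ℚ) := by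
          rw [Finset.sum_const, nsmul_eq_mul, mul_comm]
      _ ≤ _ := Finset.sum_le_sum hpair
  have hb2 : ((Sᶜ \ T).card : ℚ) ≤ ∑ i ∈ Sᶜ \ T, g i := by
    calc ((Sᶜ \ T).card : ℚ) = ∑ _i ∈ Sᶜ \ T, (1:ℚ) := by
          rw [Finset.sum_const, nsmul_eq_mul, mul_one]
      _ ≤ _ := Finset.sum_le_sum hsingle
  -- cardinalities
  have hcard1 : S.card + Sᶜ.card = n := by
    rw [Finset.card_add_card_compl]; simp
  have hle : T.card ≤ Sᶜ.card := Finset.card_le_card hTsub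
  have hcard2 : (Sᶜ \ T).card = Sᶜ.card - T.card := Finset.card_sdiff_of_subset hTsub
  have hn : 2 * S.card + (Sᶜ \ T).card = n := by omega
  have hgoal : 3 * ∑ i, (1 - 2 * q i) = ∑ i, g i := by
    rw [Finset.mul_sum]
  rw [hgoal, ← htotal, ← hsplit, hsumT]
  have : ((2 * S.card + (Sᶜ \ T).card : ℕ) : ℚ) = (n : ℚ) := by rw [hn]
  push_cast at this
  linarith
end
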